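/- Given desired trajectories $\eta^{\mathsf d} \in C^1([0,T])$ and $\sigma^{\mathsf d} \in C^1([0,T])$ with $\sigma^{\mathsf d} > 0$, and initial data $\mathbb E[X_\circ] = \eta^{\mathsf d}(0)$, $\mathbb V[X_\circ] = \sigma^{\mathsf d}(0)$, the controls $u_1^*(t) = \theta^{-1}(\eta^{\mathsf d})'(t) + \eta^{\mathsf d}(t)$ and $u_2^*(t)$ with $(u_2^*)^2(t) = 2\theta\sigma^{\mathsf d}(t) + (\sigma^{\mathsf d})'(t)$ yield, via the OU mean/variance formulas, perfect tracking: $\mathbb E[X(t)] = \eta^{\mathsf d}(t)$ and $\mathbb V[X(t)] = \sigma^{\mathsf d}(t)$ for all $t \in [0,T]$. -/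

import Mathlib

open MeasureTheory intervalIntegral

theorem integral_deriv_add_const_mul_mul_exp (c : ℝ) {f f' : ℝ → ℝ}
    (hf : ∀ t, HasDerivAt f (f' t) t) (hf' : Continuous f') (t : ℝ) :
    ∫ s in (0 : ℝ)..t, (f' s + c * f s) * Real.exp (c * s) = f t * Real.exp (c * t) - f 0 := by
  have hderiv : ∀ s ∈ Set.uIcc (0 : ℝ) t,
      HasDerivAt (fun s => f s * Real.exp (c * s)) ((f' s + c * f s) * Real.exp (c * s)) s := by
    intro s _
    refine ((hf s).mul (((hasDerivAt_id s).const_mul c).exp)).congr_deriv ?_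
    simp only [id, mul_one]
    ring
  have hfc : Continuous f := continuous_iff_continuousAt.2 fun s => (hf s).continuousAt
  have hint : IntervalIntegrable (fun s => (f' s + c * f s) * Real.exp (c * s)) volume 0 t :=
    (by fun_prop : Continuous _).intervalIntegrable 0 t
  simpa using integral_eq_sub_of_hasDerivAt hderiv hint

/-- Variation of constants for `y' = -c y + g`: with `g = f' + c f`, the solution started at
`f 0` is `f` itself. -/
theorem exp_neg_mul_mul_add_integral_eq (c : ℝ) {f f' : ℝ → ℝ}
    (hf : ∀ t, HasDerivAt f (f' t) t) (hf' : Continuous f') (t : ℝ) :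
    Real.exp (-c * t) * f 0
        + Real.exp (-c * t) * ∫ s in (0 : ℝ)..t, (f' s + c * f s) * Real.exp (c * s)
      = f t := by
  rw [integral_deriv_add_const_mul_mul_exp c hf hf', ← mul_add, add_sub_cancel, mul_left_comm,
    ← Real.exp_add, neg_mul, neg_add_cancel, Real.exp_zero, mul_one]

theorem stmt18_general (θ T : ℝ) (hθ : 0 < θ)
    (η σ η' σ' : ℝ → ℝ)
    (hη : ∀ t, HasDerivAt η (η' t) t) (hη'c : Continuous η')
    (hσ : ∀ t, HasDerivAt σ (σ' t) t) (hσ'c : Continuous σ')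
    (u₁star u₂sq : ℝ → ℝ)
    (hu₁ : ∀ t, u₁star t = θ⁻¹ * η' t + η t)
    (hu₂ : ∀ t, u₂sq t = 2 * θ * σ t + σ' t) :
    ∀ t ∈ Set.Icc (0 : ℝ) T,
      -- the OU mean formula with `E[X₀] = η(0)` tracks `η` perfectly:
      Real.exp (-θ * t) * η 0
          + θ * Real.exp (-θ * t) * (∫ s in (0 : ℝ)..t, u₁star s * Real.exp (θ * s))
        = η t
      -- and the OU variance formula with `V[X₀] = σ(0)` tracks `σ` perfectly:
      ∧ Real.exp (-(2 * θ) * t) * σ 0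
          + Real.exp (-(2 * θ) * t) * (∫ s in (0 : ℝ)..t, u₂sq s * Real.exp (2 * θ * s))
        = σ t := by
  intro t _
  have hmean : θ * ∫ s in (0 : ℝ)..t, u₁star s * Real.exp (θ * s)
      = ∫ s in (0 : ℝ)..t, (η' s + θ * η s) * Real.exp (θ * s) := by
    rw [← intervalIntegral.integral_const_mul]
    congr 1 with s
    rw [hu₁]
    field_simp
  have hvar : (fun s => u₂sq s * Real.exp (2 * θ * s))
      = fun s => (σ' s + 2 * θ * σ s) * Real.exp (2 * θ * s) := by
    ext s
    rw [hu₂, add_comm (2 * θ * σ s)]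
  refine ⟨?_, ?_⟩
  · rw [mul_comm θ, mul_assoc, hmean]
    exact exp_neg_mul_mul_add_integral_eq θ hη hη'c t
  · rw [hvar]
    exact exp_neg_mul_mul_add_integral_eq (2 * θ) hσ hσ'c t

/-- perfect tracking for the OU process: for desired `C¹` trajectories
`η, σ` with `σ > 0`, initial data `E[X₀] = η(0)`, `V[X₀] = σ(0)`, and controls
`u₁*(t) = θ⁻¹ η'(t) + η(t)`, `(u₂*)²(t) = 2θσ(t) + σ'(t)`, the OU mean/variance
formulas give perfect tracking: `E[X(t)] = η(t)` and `V[X(t)] = σ(t)` on `[0,T]`. -/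
theorem stmt18 (θ T : ℝ) (hθ : 0 < θ) (hT : 0 < T)
    (η σ η' σ' : ℝ → ℝ)
    (hη : ∀ t, HasDerivAt η (η' t) t) (hη'c : Continuous η')
    (hσ : ∀ t, HasDerivAt σ (σ' t) t) (hσ'c : Continuous σ')
    (hηc : Continuous η) (hσc : Continuous σ)
    (hσpos : ∀ t ∈ Set.Icc (0 : ℝ) T, 0 < σ t)
    (u₁star u₂sq : ℝ → ℝ)
    (hu₁ : ∀ t, u₁star t = θ⁻¹ * η' t + η t)
    (hu₂ : ∀ t, u₂sq t = 2 * θ * σ t + σ' t) :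
    ∀ t ∈ Set.Icc (0 : ℝ) T,
      -- the OU mean formula with `E[X₀] = η(0)` tracks `η` perfectly:
      Real.exp (-θ * t) * η 0
          + θ * Real.exp (-θ * t) * (∫ s in (0 : ℝ)..t, u₁star s * Real.exp (θ * s))
        = η t
      -- and the OU variance formula with `V[X₀] = σ(0)` tracks `σ` perfectly:
      ∧ Real.exp (-(2 * θ) * t) * σ 0
          + Real.exp (-(2 * θ) * t) * (∫ s in (0 : ℝ)..t, u₂sq s * Real.exp (2 * θ * s))
        = σ t :=
  stmt18_general θ T hθ η σ η' σ' hη hη'c hσ hσ'c u₁star u₂sq hu₁ hu₂
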